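/- Let v be a smooth vector field on a closed (compact, boundaryless) smooth manifold M generating a flow Φ (write x·t), let R be the chain recurrent set of Φ, and let L : M → ℝ be a smooth Lyapunov function for (Φ, R), i.e., the derivative of L along v is strictly negative at every point of M − R and the differential dL vanishes at every point of R. Let Z be a connected component of R which is isolated in R (there is a neighborhood U₀ of Z with U₀ ∩ R = Z), and suppose L is constant on Z with value c. Let W be an open neighborhood of Z whose closure satisfies closure(W) ∩ R = Z. Then there exists ε₀ > 0 such that for every 0 < ε ≤ ε₀, every point x ∈ M with L(x) = c + ε whose ω-limit set is contained in Z belongs to W. -/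

import Mathlib

open Set Filter
open scoped Manifold Topology

/-- A smooth vector field on `M`: a smooth section of the tangent bundle. -/
def IsSmoothVF {n : ℕ} {M : Type} [TopologicalSpace M]
    [ChartedSpace (EuclideanSpace ℝ (Fin n)) M]
    [IsManifold (𝓡 n) ((⊤ : ℕ∞) : WithTop ℕ∞) M]
    (v : (x : M) → TangentSpace (𝓡 n) x) : Prop :=
  ContMDiff (𝓡 n) (𝓡 n).tangent (⊤ : ℕ∞)
    (fun x => (⟨x, v x⟩ : TangentBundle (𝓡 n) M))

/-- `γ : ℝ → M` is an integral curve of the vector field `v`: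
`γ'(t) = v(γ(t))` for all `t`. -/
def IsIntCurve {n : ℕ} {M : Type} [TopologicalSpace M]
    [ChartedSpace (EuclideanSpace ℝ (Fin n)) M]
    [IsManifold (𝓡 n) ((⊤ : ℕ∞) : WithTop ℕ∞) M]
    (v : (x : M) → TangentSpace (𝓡 n) x) (γ : ℝ → M) : Prop :=
  ∀ t : ℝ, HasMFDerivAt 𝓘(ℝ, ℝ) (𝓡 n) γ t
    ((1 : ℝ →L[ℝ] ℝ).smulRight (v (γ t)))

/-- `Φ : M × ℝ → M` (curried) is the flow generated by the vector field `v`: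
it is continuous, starts at the identity, satisfies the group law, and each
trajectory `t ↦ Φ x t` is an integral curve of `v`. -/
def IsFlowOf {n : ℕ} {M : Type} [TopologicalSpace M]
    [ChartedSpace (EuclideanSpace ℝ (Fin n)) M]
    [IsManifold (𝓡 n) ((⊤ : ℕ∞) : WithTop ℕ∞) M]
    (v : (x : M) → TangentSpace (𝓡 n) x) (Φ : M → ℝ → M) : Prop :=
  Continuous (fun p : M × ℝ => Φ p.1 p.2) ∧ (∀ x : M, Φ x 0 = x) ∧
    (∀ (x : M) (s t : ℝ), Φ x (s + t) = Φ (Φ x s) t) ∧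
    ∀ x : M, IsIntCurve v (Φ x)

/-- The chain recurrent set of the flow `Φ` (with respect to the metric `d`):
points `x` such that for all `δ > 0` and `T > 1` there is a `(δ,T)`-chain
`x = x₀, x₁, …, x_N = x`, with times `tᵢ ≥ T` and
`d(x_{i-1}·t_i, x_i) < δ`. -/
def chainRecurrentSet {M : Type} [MetricSpace M] (Φ : M → ℝ → M) : Set M :=
  {x : M | ∀ δ > (0 : ℝ), ∀ T > (1 : ℝ),
    ∃ (N : ℕ) (xs : ℕ → M) (ts : ℕ → ℝ), 0 < N ∧ xs 0 = x ∧ xs N = x ∧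
      ∀ i < N, T ≤ ts i ∧ dist (Φ (xs i) (ts i)) (xs (i + 1)) < δ}

/-- The differential of a real-valued function, regarded at each point as a
linear functional on the tangent space (this is `mfderiv`, with its codomain
`TangentSpace 𝓘(ℝ,ℝ) (f p)` read as `ℝ`). -/
noncomputable def mdiffReal {n : ℕ} {M : Type} [TopologicalSpace M]
    [ChartedSpace (EuclideanSpace ℝ (Fin n)) M]
    [IsManifold (𝓡 n) ((⊤ : ℕ∞) : WithTop ℕ∞) M]
    (f : M → ℝ) (p : M) : TangentSpace (𝓡 n) p →L[ℝ] ℝ :=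
  mfderiv (𝓡 n) 𝓘(ℝ, ℝ) f p

/-!
Let `K` be the compact set of points outside `W` whose forward orbit stays in `closure W`.
A point `y ∈ K` lies in `closure W` but not in `Z ⊆ W`, so it is not chain recurrent and `L`
strictly decreases along its orbit right away; its ω-limit set, being chain recurrent and contained
in `closure W`, lies in `Z`, where `L = c`. Hence `L > c` on `K`, and by compactness `L > c + ε₀`
on `K`. If `x ∉ W` has its ω-limit set in `Z`, its orbit eventually stays in `W`, and the point
where it leaves `W` for the last time lies in `K`; as `L` does not increase along orbits,
`L x > c + ε₀`.
-/

open scoped omegaLimit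

theorem Continuous.exists_last_exit {X : Type*} [TopologicalSpace X] {γ : ℝ → X}
    (hγ : Continuous γ) {W : Set X} (hW : IsOpen W) (h₀ : γ 0 ∉ W)
    (hev : ∀ᶠ t in atTop, γ t ∈ W) : ∃ τ, 0 ≤ τ ∧ γ τ ∉ W ∧ ∀ t ≥ τ, γ t ∈ closure W := by
  set S := Ici 0 ∩ γ ⁻¹' Wᶜ
  have hS : IsClosed S := isClosed_Ici.inter (hW.isClosed_compl.preimage hγ)
  obtain ⟨T, hT⟩ := eventually_atTop.1 hev
  have hSbdd : BddAbove S := ⟨T, fun t ht => not_lt.1 fun h => ht.2 (hT t h.le)⟩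
  obtain ⟨hτ₀, hτW⟩ := hS.csSup_mem ⟨0, mem_Ici.2 le_rfl, h₀⟩ hSbdd
  have hafter : Ioi (sSup S) ⊆ γ ⁻¹' closure W := fun t ht => subset_closure <| not_not.1 fun hW =>
    (le_csSup hSbdd ⟨mem_Ici.2 (hτ₀.trans ht.le), hW⟩).not_gt ht
  refine ⟨sSup S, hτ₀, hτW, fun t ht => ?_⟩
  exact closure_minimal hafter (isClosed_closure.preimage hγ) (by rwa [closure_Ioi])

theorem IsCompact.exists_pos_add_lt {X : Type*} [TopologicalSpace X] {K : Set X}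
    (hK : IsCompact K) {f : X → ℝ} (hf : ContinuousOn f K) {c : ℝ} (h : ∀ y ∈ K, c < f y) :
    ∃ ε > 0, ∀ y ∈ K, c + ε < f y := by
  rcases K.eq_empty_or_nonempty with rfl | hne
  · exact ⟨1, one_pos, by simp⟩
  obtain ⟨y₀, hy₀, hmin⟩ := hK.exists_isMinOn hne hf
  refine ⟨(f y₀ - c) / 2, by linarith [h y₀ hy₀], fun y hy => ?_⟩
  have hy₀y : f y₀ ≤ f y := hmin hy
  linarith [h y₀ hy₀]

section OmegaLimit

variable {τ α β : Type*} [TopologicalSpace β] {ϕ : τ → α → β} {x : α}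

theorem omegaLimit_singleton_subset_of_eventually_mem {f : Filter τ} {F : Set β}
    (hF : IsClosed F) (h : ∀ᶠ t in f, ϕ t x ∈ F) : ω f ϕ {x} ⊆ F := by
  refine omegaLimit_subset_closure_image2 _ _ _ h |>.trans (closure_minimal ?_ hF)
  rintro _ ⟨t, ht, _, rfl, rfl⟩
  exact ht

theorem le_of_mem_omegaLimit [Preorder τ] {z : β} {g : β → ℝ} (hg : Continuous g)
    (hanti : Antitone fun t => g (ϕ t x)) (hz : z ∈ ω⁺ ϕ {x}) (t : τ) : g z ≤ g (ϕ t x) :=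
  omegaLimit_singleton_subset_of_eventually_mem (isClosed_le hg continuous_const)
    (mem_of_superset (Ici_mem_atTop t) fun _ hs => hanti hs) hz

theorem iInter_closure_image_Ici_eq_omegaLimit (Φ : α → ℝ → β) (x : α) :
    ⋂ t : ℝ, closure (Φ x '' Ici t) = ω⁺ (flip Φ) {x} := by
  rw [omegaLimit_def,
    atTop_basis.biInter_mem fun _ _ huv => closure_mono (image2_subset huv le_rfl)]
  simp [image2_singleton_right, flip]

end OmegaLimit

theorem omegaLimit_subset_chainRecurrentSet {M : Type} [MetricSpace M] [CompactSpace M]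
    {Φ : M → ℝ → M} (hcont : ∀ t, Continuous fun y => Φ y t)
    (hadd : ∀ y s t, Φ y (s + t) = Φ (Φ y s) t) (x : M) :
    ω⁺ (flip Φ) {x} ⊆ chainRecurrentSet Φ := by
  intro z hz δ hδ T hT
  obtain ⟨η, hη, hηT⟩ := Metric.uniformContinuous_iff.1
    (CompactSpace.uniformContinuous_of_continuous (hcont T)) δ hδ
  have hfreq : ∀ r > 0, ∀ t₀ : ℝ, ∃ t ≥ t₀, dist (Φ x t) z < r := fun r hr t₀ =>
    frequently_atTop.1 (mapClusterPt_iff_frequently.1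
      ((mem_omegaLimit_singleton_iff_mapClusterPt _ _ _ _).1 hz) _ (Metric.ball_mem_nhds z hr)) t₀
  obtain ⟨t₀, -, ht₀⟩ := hfreq η hη 0
  obtain ⟨t₁, ht₁, ht₁z⟩ := hfreq δ hδ (t₀ + T + T)
  -- the chain `z ⇝ Φ x (t₀ + T) ⇝ z` shadows the orbit of `x` from time `t₀` to time `t₁`
  refine ⟨2, fun i => if i = 1 then Φ x (t₀ + T) else z,
    fun i => if i = 0 then T else t₁ - (t₀ + T), two_pos, rfl, rfl, fun i hi => ?_⟩
  interval_cases i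
  · simpa [hadd, dist_comm] using hηT ht₀
  · refine ⟨by simp; linarith, ?_⟩
    simpa [← hadd] using ht₁z

section IsFlowOf

variable {n : ℕ} {M : Type} [TopologicalSpace M] [ChartedSpace (EuclideanSpace ℝ (Fin n)) M]
  [IsManifold (𝓡 n) ((⊤ : ℕ∞) : WithTop ℕ∞) M] {v : (x : M) → TangentSpace (𝓡 n) x}
  {Φ : M → ℝ → M} {L : M → ℝ}

theorem IsFlowOf.continuous_orbit (hΦ : IsFlowOf v Φ) (x : M) : Continuous (Φ x) :=
  hΦ.1.comp (Continuous.prodMk_right x)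

theorem IsFlowOf.continuous_time (hΦ : IsFlowOf v Φ) (t : ℝ) : Continuous fun y => Φ y t :=
  hΦ.1.comp (Continuous.prodMk_left t)

theorem IsFlowOf.hasDerivAt_comp (hΦ : IsFlowOf v Φ) {x : M} {t : ℝ}
    (hL : MDifferentiableAt (𝓡 n) 𝓘(ℝ, ℝ) L (Φ x t)) :
    HasDerivAt (fun s => L (Φ x s)) (mdiffReal L (Φ x t) (v (Φ x t))) t := by
  have h : HasMFDerivAt (𝓡 n) 𝓘(ℝ, ℝ) L (Φ x t) (mdiffReal L (Φ x t)) := hL.hasMFDerivAt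
  have h' : HasFDerivAt (fun s => L (Φ x s))
      ((mdiffReal L (Φ x t)).comp ((1 : ℝ →L[ℝ] ℝ).smulRight (v (Φ x t)))) t :=
    hasMFDerivAt_iff_hasFDerivAt.1 (h.comp t (hΦ.2.2.2 x t))
  simpa using h'.hasDerivAt

theorem IsFlowOf.antitone_comp (hΦ : IsFlowOf v Φ) (hL : MDifferentiable (𝓡 n) 𝓘(ℝ, ℝ) L)
    (hle : ∀ p, mdiffReal L p (v p) ≤ 0) (x : M) : Antitone fun t => L (Φ x t) :=
  antitone_of_hasDerivAt_nonpos (fun _ => hΦ.hasDerivAt_comp (hL _)) fun _ => hle _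

theorem IsFlowOf.exists_lt_of_mdiffReal_neg (hΦ : IsFlowOf v Φ) {x : M}
    (hL : MDifferentiableAt (𝓡 n) 𝓘(ℝ, ℝ) L x) (hneg : mdiffReal L x (v x) < 0) :
    ∃ t > 0, L (Φ x t) < L x := by
  have h := hΦ.hasDerivAt_comp (t := 0) (by rwa [hΦ.2.1])
  rw [hΦ.2.1] at h
  obtain ⟨t, hslope, ht⟩ :=
    ((h.hasDerivWithinAt.liminf_right_slope_le hneg).and_eventually self_mem_nhdsWithin).exists
  refine ⟨t, ht, ?_⟩
  rw [slope_def_field, div_lt_iff₀ (sub_pos.2 ht)] at hslope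
  simpa [hΦ.2.1] using hslope

theorem IsFlowOf.lt_of_mem_omegaLimit (hΦ : IsFlowOf v Φ)
    (hL : MDifferentiable (𝓡 n) 𝓘(ℝ, ℝ) L) (hle : ∀ p, mdiffReal L p (v p) ≤ 0) {y z : M}
    (hy : mdiffReal L y (v y) < 0) (hz : z ∈ ω⁺ (flip Φ) {y}) : L z < L y := by
  obtain ⟨t, -, ht⟩ := hΦ.exists_lt_of_mdiffReal_neg (hL y) hy
  exact (le_of_mem_omegaLimit hL.continuous (hΦ.antitone_comp hL hle y) hz t).trans_lt ht

end IsFlowOf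

theorem lyapunov_level_near_component_general
    (n : ℕ) (M : Type) [MetricSpace M]
    [ChartedSpace (EuclideanSpace ℝ (Fin n)) M]
    [IsManifold (𝓡 n) ((⊤ : ℕ∞) : WithTop ℕ∞) M]
    [CompactSpace M]
    (v : (x : M) → TangentSpace (𝓡 n) x)
    (Φ : M → ℝ → M) (hΦ : IsFlowOf v Φ)
    (L : M → ℝ) (hL : ContMDiff (𝓡 n) 𝓘(ℝ, ℝ) (⊤ : ℕ∞) L)
    (hLyap : ∀ x : M, x ∉ chainRecurrentSet Φ → mdiffReal (n := n) L x (v x) < 0)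
    (hdL : ∀ x ∈ chainRecurrentSet Φ, mdiffReal (n := n) L x = 0)
    (Z : Set M)
    (c : ℝ) (hc : ∀ z ∈ Z, L z = c)
    (W : Set M) (hWopen : IsOpen W) (hZW : Z ⊆ W)
    (hWR : closure W ∩ chainRecurrentSet Φ = Z) :
    ∃ ε₀ : ℝ, 0 < ε₀ ∧ ∀ ε : ℝ, 0 < ε → ε ≤ ε₀ →
      ∀ x : M, L x = c + ε →
        (⋂ t : ℝ, closure (Φ x '' Set.Ici t)) ⊆ Z → x ∈ W := by
  have hLd : MDifferentiable (𝓡 n) 𝓘(ℝ, ℝ) L := hL.mdifferentiable (by simp)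
  have hle : ∀ p, mdiffReal L p (v p) ≤ 0 := fun p => by
    by_cases hp : p ∈ chainRecurrentSet Φ
    · simp [hdL p hp]
    · exact (hLyap p hp).le
  set K := {y | y ∉ W ∧ ∀ t ≥ 0, Φ y t ∈ closure W}
  have hK : IsCompact K := by
    simp only [K, ofPred_and, ofPred_forall]
    exact (hWopen.isClosed_compl.inter (isClosed_iInter fun t => isClosed_iInter fun _ =>
      isClosed_closure.preimage (hΦ.continuous_time t))).isCompact
  have hcK : ∀ y ∈ K, c < L y := by
    rintro y ⟨hyW, hyfwd⟩
    have hyR : y ∉ chainRecurrentSet Φ := fun hyR =>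
      hyW (hZW (hWR ▸ ⟨by simpa [hΦ.2.1] using hyfwd 0 le_rfl, hyR⟩))
    obtain ⟨z, hz⟩ := nonempty_omegaLimit atTop (flip Φ) {y} (singleton_nonempty y)
    have hzZ : z ∈ Z := hWR ▸ ⟨omegaLimit_singleton_subset_of_eventually_mem isClosed_closure
      (eventually_atTop.2 ⟨0, hyfwd⟩) hz,
      omegaLimit_subset_chainRecurrentSet hΦ.continuous_time hΦ.2.2.1 y hz⟩
    exact hc z hzZ ▸ hΦ.lt_of_mem_omegaLimit hLd hle (hLyap y hyR) hz
  obtain ⟨ε₀, hε₀, hLK⟩ := hK.exists_pos_add_lt hL.continuous.continuousOn hcK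
  refine ⟨ε₀, hε₀, fun ε _ hεε₀ x hx hω => ?_⟩
  by_contra hxW
  rw [iInter_closure_image_Ici_eq_omegaLimit] at hω
  have hev : ∀ᶠ t in atTop, Φ x t ∈ W := by
    simpa [flip] using eventually_mapsTo_of_isOpen_of_omegaLimit_subset atTop (flip Φ) {x} hWopen
      (hω.trans hZW)
  obtain ⟨τ, hτ, hτW, hτcl⟩ :=
    (hΦ.continuous_orbit x).exists_last_exit hWopen (by rwa [hΦ.2.1]) hev
  have hτK : Φ x τ ∈ K := ⟨hτW, fun t ht => by rw [← hΦ.2.2.1]; exact hτcl _ (by linarith)⟩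
  have hLτ : L (Φ x τ) ≤ L x := by simpa [hΦ.2.1] using hΦ.antitone_comp hLd hle x hτ
  linarith [hLK _ hτK]

/-- **(Lemma `lmcon`.)**  Let `L` be a smooth Lyapunov function for the pair
`(Φ, R)`, where `R` is the chain recurrent set of the flow `Φ` of a smooth
vector field `v` on a closed manifold `M`, let `Z` be an isolated connected
component of `R` on which `L` is constant with value `c`, and let `W` be an
open neighbourhood of `Z` with `closure W ∩ R = Z`.  Then there is `ε₀ > 0`
such that for all `0 < ε ≤ ε₀`, every `x` with `L x = c + ε` whose ω-limit
set is contained in `Z` lies in `W`. -/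
theorem lyapunov_level_near_component
    (n : ℕ) (M : Type) [MetricSpace M]
    [ChartedSpace (EuclideanSpace ℝ (Fin n)) M]
    [IsManifold (𝓡 n) ((⊤ : ℕ∞) : WithTop ℕ∞) M]
    [CompactSpace M]
    (v : (x : M) → TangentSpace (𝓡 n) x) (hv : IsSmoothVF v)
    (Φ : M → ℝ → M) (hΦ : IsFlowOf v Φ)
    (L : M → ℝ) (hL : ContMDiff (𝓡 n) 𝓘(ℝ, ℝ) (⊤ : ℕ∞) L)
    (hLyap : ∀ x : M, x ∉ chainRecurrentSet Φ → mdiffReal (n := n) L x (v x) < 0)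
    (hdL : ∀ x ∈ chainRecurrentSet Φ, mdiffReal (n := n) L x = 0)
    (Z : Set M)
    (hZ : ∃ x ∈ chainRecurrentSet Φ, Z = connectedComponentIn (chainRecurrentSet Φ) x)
    (hiso : ∃ U₀ : Set M, IsOpen U₀ ∧ Z ⊆ U₀ ∧ U₀ ∩ chainRecurrentSet Φ = Z)
    (c : ℝ) (hc : ∀ z ∈ Z, L z = c)
    (W : Set M) (hWopen : IsOpen W) (hZW : Z ⊆ W)
    (hWR : closure W ∩ chainRecurrentSet Φ = Z) :
    ∃ ε₀ : ℝ, 0 < ε₀ ∧ ∀ ε : ℝ, 0 < ε → ε ≤ ε₀ →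
      ∀ x : M, L x = c + ε →
        (⋂ t : ℝ, closure (Φ x '' Set.Ici t)) ⊆ Z → x ∈ W :=
  lyapunov_level_near_component_general n M v Φ hΦ L hL hLyap hdL Z c hc W hWopen hZW hWR
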